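/- arXiv:2601.10840 — 2 statements merged into one kernel-verified Lean document; each statement's English description precedes it below -/
import Mathlib

section
/- Let L be an ortholattice with MPH dual (P_L, E) where (x,y) ∈ E iff x⁻¹(1) ∩ y⁻¹(0) = ∅, and let g be the dual orthocomplement map g(x)(a) = 1 iff x(a') = 0. Then for all x, y ∈ P_L: if xE ⊆ yE then Eg(x) ⊆ Eg(y). -/
/-- A (lattice) filter: nonempty, up-closed, closed under meets. -/
def IsLatFilter {L : Type*} [Lattice L] (F : Set L) : Prop :=
  F.Nonempty ∧ (∀ a b : L, a ∈ F → a ≤ b → b ∈ F) ∧ (∀ a b : L, a ∈ F → b ∈ F → a ⊓ b ∈ F)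

/-- A (lattice) ideal: nonempty, down-closed, closed under joins. -/
def IsLatIdeal {L : Type*} [Lattice L] (I : Set L) : Prop :=
  I.Nonempty ∧ (∀ a b : L, a ∈ I → b ≤ a → b ∈ I) ∧ (∀ a b : L, a ∈ I → b ∈ I → a ⊔ b ∈ I)

/-- A maximal disjoint filter-ideal pair. -/
def IsMDFIP {L : Type*} [Lattice L] (F I : Set L) : Prop :=
  IsLatFilter F ∧ IsLatIdeal I ∧ F ∩ I = ∅ ∧
  ∀ G J : Set L, IsLatFilter G → IsLatIdeal J → G ∩ J = ∅ → F ⊆ G → I ⊆ J → G = F ∧ J = I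

/-- An orthocomplementation on a bounded lattice. -/
def IsOrtho {L : Type*} [Lattice L] [BoundedOrder L] (oc : L → L) : Prop :=
  (∀ a : L, oc (oc a) = a) ∧ (∀ a : L, a ⊓ oc a = ⊥) ∧ (∀ a : L, a ⊔ oc a = ⊤) ∧
  (∀ a b : L, oc (a ⊓ b) = oc a ⊔ oc b) ∧ (∀ a b : L, oc (a ⊔ b) = oc a ⊓ oc b)

/-- A partial (0,1)-lattice homomorphism into the two-element lattice `Bool`,
represented as a map into `Option Bool` (`none` = undefined). -/
def IsPartialHom {L : Type*} [Lattice L] [BoundedOrder L] (f : L → Option Bool) : Prop :=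
  f ⊤ = some true ∧ f ⊥ = some false ∧
  (∀ a b : L, ∀ x y : Bool, f a = some x → f b = some y →
    f (a ⊓ b) = some (x && y) ∧ f (a ⊔ b) = some (x || y))

/-- A maximal partial homomorphism (MPH): admits no proper partial-hom extension. -/
def IsMPH {L : Type*} [Lattice L] [BoundedOrder L] (f : L → Option Bool) : Prop :=
  IsPartialHom f ∧
  ∀ h : L → Option Bool, IsPartialHom h → (∀ a : L, ∀ b : Bool, f a = some b → h a = some b) → h = f

/-- The Ploščica relation on partial maps: `x⁻¹(1) ∩ y⁻¹(0) = ∅`. -/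
def Erel {L : Type*} (x y : L → Option Bool) : Prop :=
  ∀ a : L, ¬ (x a = some true ∧ y a = some false)

/-- The dual map `g` representing the orthocomplement: `g(f)(a) = 1` iff `f(a') = 0`. -/
def gmap {L : Type*} (oc : L → L) (f : L → Option Bool) : L → Option Bool :=
  fun a => Option.map (fun b => !b) (f (oc a))

/-!
The orthocomplement dualizes to an involution `g` of the MPHs which swaps the two sides of the
relation: `z E g(x)` iff `x E g(z)`. So if `z E g(x)`, then `x E g(z)`, hence `y E g(z)` by
hypothesis (applied to the MPH `g(z)`), and finally `z E g(y)`.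
-/

theorem gmap_apply_eq_some {L : Type*} (oc : L → L) (f : L → Option Bool) (a : L) (b : Bool) :
    gmap oc f a = some b ↔ f (oc a) = some (!b) := by
  unfold gmap
  cases f (oc a) <;> simp [Bool.not_eq_eq_eq_not]

theorem gmap_gmap {L : Type*} {oc : L → L} (hoc : Function.Involutive oc)
    (f : L → Option Bool) : gmap oc (gmap oc f) = f := by
  funext a
  simp [gmap, hoc a, Option.map_map, Function.comp_def]

theorem erel_gmap_swap {L : Type*} {oc : L → L} (hoc : Function.Involutive oc)
    {x z : L → Option Bool} (h : Erel z (gmap oc x)) : Erel x (gmap oc z) := by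
  rintro a ⟨hxa, hgza⟩
  rw [gmap_apply_eq_some] at hgza
  exact h (oc a) ⟨hgza, by rw [gmap_apply_eq_some, hoc a]; exact hxa⟩

section Ortho

variable {L : Type*} [Lattice L] [BoundedOrder L] {oc : L → L}

theorem isPartialHom_gmap (hoc : IsOrtho oc) {f : L → Option Bool} (hf : IsPartialHom f) :
    IsPartialHom (gmap oc f) := by
  obtain ⟨-, hbot, htop, hmeet, hjoin⟩ := hoc
  obtain ⟨ftop, fbot, fop⟩ := hf
  have oc_top : oc ⊤ = ⊥ := by simpa using hbot ⊤
  have oc_bot : oc ⊥ = ⊤ := by simpa using htop ⊥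
  refine ⟨by simp [gmap, oc_top, fbot], by simp [gmap, oc_bot, ftop], ?_⟩
  intro a b u v ha hb
  rw [gmap_apply_eq_some] at ha hb
  obtain ⟨hm, hj⟩ := fop _ _ _ _ ha hb
  constructor
  · rw [gmap_apply_eq_some, hmeet, hj, Bool.not_and]
  · rw [gmap_apply_eq_some, hjoin, hm, Bool.not_or]

theorem isMPH_gmap (hoc : IsOrtho oc) {f : L → Option Bool} (hf : IsMPH f) :
    IsMPH (gmap oc f) := by
  refine ⟨isPartialHom_gmap hoc hf.1, fun h hh hext => ?_⟩
  have hext' : ∀ a b, f a = some b → gmap oc h a = some b := by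
    intro a b hab
    rw [gmap_apply_eq_some]
    apply hext
    rw [gmap_apply_eq_some, hoc.1 a, Bool.not_not]
    exact hab
  rw [← gmap_gmap hoc.1 h, hf.2 _ (isPartialHom_gmap hoc hh) hext']

end Ortho

theorem gmap_M2_general {L : Type*} [Lattice L] [BoundedOrder L] (oc : L → L)
    (hoc : IsOrtho oc) (x y : L → Option Bool)
    (hxy : ∀ z : L → Option Bool, IsMPH z → Erel x z → Erel y z) :
    ∀ z : L → Option Bool, IsMPH z → Erel z (gmap oc x) → Erel z (gmap oc y) := by
  intro z hz hzgx
  exact erel_gmap_swap hoc.1 (hxy _ (isMPH_gmap hoc hz) (erel_gmap_swap hoc.1 hzgx))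

/-- Condition (M2) for the dual of an ortholattice:
if `xE ⊆ yE` (within the set of MPHs) then `Eg(x) ⊆ Eg(y)`. -/
theorem gmap_M2 {L : Type*} [Lattice L] [BoundedOrder L] (oc : L → L)
    (hoc : IsOrtho oc) (x y : L → Option Bool) (hx : IsMPH x) (hy : IsMPH y)
    (hxy : ∀ z : L → Option Bool, IsMPH z → Erel x z → Erel y z) :
    ∀ z : L → Option Bool, IsMPH z → Erel z (gmap oc x) → Erel z (gmap oc y) :=
  gmap_M2_general oc hoc x y hxy
end

section
/- Let L be a bounded lattice and (P_L, E) its dual digraph of MPHs with the Plo\u0161\u010dica relation. Then for any x, y ∈ P_L: (i) xE ⊆ yE if and only if y⁻¹(1) ⊆ x⁻¹(1); and (ii) Ex ⊆ Ey if and only if y⁻¹(0) ⊆ x⁻¹(0). -/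
section Filters

variable {L : Type*} [Lattice L]

lemma isLatFilter_Ici (a : L) : IsLatFilter (Set.Ici a) :=
  ⟨⟨a, le_rfl⟩, fun _ _ hb hbc => le_trans hb hbc, fun _ _ => le_inf⟩

-- An ideal of `L` unfolds to a filter of `Lᵒᵈ`, so the ideal lemmas are filter lemmas over `Lᵒᵈ`.
lemma isLatIdeal_Iic (a : L) : IsLatIdeal (Set.Iic a) :=
  isLatFilter_Ici (L := Lᵒᵈ) a

lemma IsLatFilter.top_mem [OrderTop L] {F : Set L} (hF : IsLatFilter F) : ⊤ ∈ F :=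
  let ⟨a, ha⟩ := hF.1
  hF.2.1 a ⊤ ha le_top

lemma IsLatIdeal.bot_mem [OrderBot L] {I : Set L} (hI : IsLatIdeal I) : ⊥ ∈ I :=
  IsLatFilter.top_mem (L := Lᵒᵈ) hI

lemma IsLatFilter.biUnion {ι : Type*} {s : Set ι} {F : ι → Set L} (hs : s.Nonempty)
    (hdir : DirectedOn (F ⁻¹'o (· ⊆ ·)) s) (hF : ∀ i ∈ s, IsLatFilter (F i)) :
    IsLatFilter (⋃ i ∈ s, F i) := by
  obtain ⟨i₀, hi₀⟩ := hs
  refine ⟨(hF i₀ hi₀).1.mono (Set.subset_biUnion_of_mem hi₀), ?_, ?_⟩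
  · simp only [Set.mem_iUnion₂]
    rintro a b ⟨i, hi, ha⟩ hab
    exact ⟨i, hi, (hF i hi).2.1 a b ha hab⟩
  · simp only [Set.mem_iUnion₂]
    rintro a b ⟨i, hi, ha⟩ ⟨j, hj, hb⟩
    obtain ⟨k, hk, hik, hjk⟩ := hdir i hi j hj
    exact ⟨k, hk, (hF k hk).2.2 a b (hik ha) (hjk hb)⟩

lemma IsLatIdeal.biUnion {ι : Type*} {s : Set ι} {I : ι → Set L} (hs : s.Nonempty)
    (hdir : DirectedOn (I ⁻¹'o (· ⊆ ·)) s) (hI : ∀ i ∈ s, IsLatIdeal (I i)) :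
    IsLatIdeal (⋃ i ∈ s, I i) :=
  IsLatFilter.biUnion (L := Lᵒᵈ) hs hdir hI

lemma IsMDFIP.dual {F I : Set L} (h : IsMDFIP F I) : IsMDFIP (L := Lᵒᵈ) I F := by
  obtain ⟨hF, hI, hd, hmax⟩ := h
  have inter_comm_eq_empty {A B : Set L} (h : A ∩ B = ∅) : B ∩ A = ∅ := by
    rwa [Set.inter_comm]
  exact ⟨hI, hF, inter_comm_eq_empty hd, fun G J hG hJ hGJ hIG hFJ =>
    (hmax J G hJ hG (inter_comm_eq_empty hGJ) hFJ hIG).symm⟩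

lemma exists_isMDFIP_of_disjoint {F I : Set L} (hF : IsLatFilter F) (hI : IsLatIdeal I)
    (hd : F ∩ I = ∅) : ∃ G J : Set L, IsMDFIP G J ∧ F ⊆ G ∧ I ⊆ J := by
  set S : Set (Set L × Set L) := {p | IsLatFilter p.1 ∧ IsLatIdeal p.2 ∧ p.1 ∩ p.2 = ∅}
  have hchain : ∀ c ⊆ S, IsChain (· ≤ ·) c → ∀ p ∈ c, ∃ ub ∈ S, ∀ q ∈ c, q ≤ ub := by
    intro c hcS hc p hp
    have hdir : DirectedOn (· ≤ ·) c := hc.directedOn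
    refine ⟨(⋃ q ∈ c, q.1, ⋃ q ∈ c, q.2), ⟨?_, ?_, ?_⟩, fun q hq =>
      ⟨Set.subset_biUnion_of_mem (u := Prod.fst) hq, Set.subset_biUnion_of_mem (u := Prod.snd) hq⟩⟩
    · refine IsLatFilter.biUnion ⟨p, hp⟩ (fun q hq r hr => ?_) fun q hq => (hcS hq).1
      obtain ⟨s, hs, hqs, hrs⟩ := hdir q hq r hr
      exact ⟨s, hs, hqs.1, hrs.1⟩
    · refine IsLatIdeal.biUnion ⟨p, hp⟩ (fun q hq r hr => ?_) fun q hq => (hcS hq).2.1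
      obtain ⟨s, hs, hqs, hrs⟩ := hdir q hq r hr
      exact ⟨s, hs, hqs.2, hrs.2⟩
    · refine Set.eq_empty_of_forall_notMem fun a ⟨ha₁, ha₂⟩ => ?_
      simp only [Set.mem_iUnion₂] at ha₁ ha₂
      obtain ⟨⟨q, hq, haq⟩, ⟨r, hr, har⟩⟩ := ha₁, ha₂
      obtain ⟨s, hs, hqs, hrs⟩ := hdir q hq r hr
      simpa [(hcS hs).2.2] using Set.mem_inter (hqs.1 haq) (hrs.2 har)
  obtain ⟨m, hFIm, hm⟩ := zorn_le_nonempty₀ S hchain (F, I) ⟨hF, hI, hd⟩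
  refine ⟨m.1, m.2, ⟨hm.1.1, hm.1.2.1, hm.1.2.2, fun G J hG hJ hGJ hmG hmJ => ?_⟩, hFIm.1, hFIm.2⟩
  have hle : (G, J) ≤ m := hm.2 (y := (G, J)) ⟨hG, hJ, hGJ⟩ ⟨hmG, hmJ⟩
  exact ⟨le_antisymm hle.1 hmG, le_antisymm hle.2 hmJ⟩

lemma IsMDFIP.mem_left_of {F I : Set L} (h : IsMDFIP F I) {b : L}
    (hb : ∀ f ∈ F, ∀ i ∈ I, ¬ f ⊓ b ≤ i) : b ∈ F := by
  obtain ⟨hF, hI, -, hmax⟩ := h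
  obtain ⟨f₀, hf₀⟩ := hF.1
  set G : Set L := {c | ∃ f ∈ F, f ⊓ b ≤ c}
  have hG : IsLatFilter G := by
    refine ⟨⟨b, f₀, hf₀, inf_le_right⟩, fun c d ⟨f, hf, hfc⟩ hcd => ⟨f, hf, hfc.trans hcd⟩, ?_⟩
    rintro c d ⟨f, hf, hfc⟩ ⟨g, hg, hgd⟩
    refine ⟨f ⊓ g, hF.2.2 f g hf hg, le_inf ?_ ?_⟩
    · exact le_trans (inf_le_inf_right b inf_le_left) hfc
    · exact le_trans (inf_le_inf_right b inf_le_right) hgd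
  have hGI : G ∩ I = ∅ :=
    Set.eq_empty_of_forall_notMem fun c ⟨⟨f, hf, hfc⟩, hc⟩ => hb f hf c hc hfc
  rw [← (hmax G I hG hI hGI (fun f hf => ⟨f, hf, inf_le_left⟩) le_rfl).1]
  exact ⟨f₀, hf₀, inf_le_right⟩

lemma IsMDFIP.mem_right_of {F I : Set L} (h : IsMDFIP F I) {b : L}
    (hb : ∀ i ∈ I, ∀ f ∈ F, ¬ f ≤ i ⊔ b) : b ∈ I :=
  h.dual.mem_left_of hb

end Filters

section PairMap

variable {L : Type*}

open Classical in
noncomputable def pairMap (F I : Set L) : L → Option Bool :=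
  fun b => if b ∈ F then some true else if b ∈ I then some false else none

lemma pairMap_eq_some_true {F I : Set L} {b : L} : pairMap F I b = some true ↔ b ∈ F := by
  unfold pairMap; split_ifs <;> simp_all

lemma pairMap_eq_some_false {F I : Set L} (hd : F ∩ I = ∅) {b : L} :
    pairMap F I b = some false ↔ b ∈ I := by
  have hnot : b ∈ I → b ∉ F := fun hI hF => (Set.eq_empty_iff_forall_notMem.1 hd) b ⟨hF, hI⟩
  unfold pairMap; split_ifs <;> simp_all

lemma pairMap_eq_some {F I : Set L} {b : L} {u : Bool} (h : pairMap F I b = some u) :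
    u = true ∧ b ∈ F ∨ u = false ∧ b ∈ I := by
  unfold pairMap at h; split_ifs at h <;> simp_all

end PairMap

section PartialHom

variable {L : Type*} [Lattice L] [BoundedOrder L]

lemma IsPartialHom.le_of_le {f : L → Option Bool} (hf : IsPartialHom f) {a b : L} {u v : Bool}
    (ha : f a = some u) (hb : f b = some v) (hab : a ≤ b) : u ≤ v := by
  have h := (hf.2.2 a b u v ha hb).1
  rw [inf_eq_left.mpr hab, ha, Option.some_inj] at h
  revert h
  cases u <;> cases v <;> decide

lemma isPartialHom_pairMap {F I : Set L} (hF : IsLatFilter F) (hI : IsLatIdeal I)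
    (hd : F ∩ I = ∅) : IsPartialHom (pairMap F I) := by
  have mem_F {b : L} : b ∈ F → pairMap F I b = some true := pairMap_eq_some_true.2
  have mem_I {b : L} : b ∈ I → pairMap F I b = some false := (pairMap_eq_some_false hd).2
  refine ⟨mem_F hF.top_mem, mem_I hI.bot_mem, fun a b u v ha hb => ?_⟩
  rcases pairMap_eq_some ha with ⟨rfl, haF⟩ | ⟨rfl, haI⟩ <;>
    rcases pairMap_eq_some hb with ⟨rfl, hbF⟩ | ⟨rfl, hbI⟩
  · exact ⟨mem_F (hF.2.2 a b haF hbF), mem_F (hF.2.1 a _ haF le_sup_left)⟩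
  · exact ⟨mem_I (hI.2.1 b _ hbI inf_le_right), mem_F (hF.2.1 a _ haF le_sup_left)⟩
  · exact ⟨mem_I (hI.2.1 a _ haI inf_le_left), mem_F (hF.2.1 b _ hbF le_sup_right)⟩
  · exact ⟨mem_I (hI.2.1 a _ haI inf_le_left), mem_I (hI.2.2 a b haI hbI)⟩

lemma IsMDFIP.isMPH_pairMap {F I : Set L} (h : IsMDFIP F I) : IsMPH (pairMap F I) := by
  have hd := h.2.2.1
  refine ⟨isPartialHom_pairMap h.1 h.2.1 hd, fun g hg hext => funext fun b => ?_⟩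
  have g_F {f : L} (hf : f ∈ F) : g f = some true := hext f true (pairMap_eq_some_true.2 hf)
  have g_I {i : L} (hi : i ∈ I) : g i = some false := hext i false ((pairMap_eq_some_false hd).2 hi)
  rcases hgb : g b with _ | _ | _
  · cases hb : pairMap F I b with
    | none => rfl
    | some u => simpa [hgb] using hext b u hb
  · refine ((pairMap_eq_some_false hd).2 (h.mem_right_of fun i hi f hf hfi => ?_)).symm
    have hib : g (i ⊔ b) = some false := (hg.2.2 i b false false (g_I hi) hgb).2
    exact absurd (hg.le_of_le (g_F hf) hib hfi) (by decide)
  · refine (pairMap_eq_some_true.2 (h.mem_left_of fun f hf i hi hfi => ?_)).symm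
    have hfb : g (f ⊓ b) = some true := (hg.2.2 f b true true (g_F hf) hgb).1
    exact absurd (hg.le_of_le hfb (g_I hi) hfi) (by decide)

lemma exists_isMPH_of_disjoint {F I : Set L} (hF : IsLatFilter F) (hI : IsLatIdeal I)
    (hd : F ∩ I = ∅) :
    ∃ z : L → Option Bool, IsMPH z ∧ (∀ a ∈ F, z a = some true) ∧ (∀ a ∈ I, z a = some false) := by
  obtain ⟨G, J, hGJ, hFG, hIJ⟩ := exists_isMDFIP_of_disjoint hF hI hd
  exact ⟨pairMap G J, hGJ.isMPH_pairMap, fun a ha => pairMap_eq_some_true.2 (hFG ha),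
    fun a ha => (pairMap_eq_some_false hGJ.2.2.1).2 (hIJ ha)⟩

lemma IsMPH.isMDFIP {x : L → Option Bool} (hx : IsMPH x) :
    IsMDFIP {a | x a = some true} {a | x a = some false} := by
  obtain ⟨hph, hmax⟩ := hx
  set F : Set L := {c | ∃ a, x a = some true ∧ a ≤ c}
  set I : Set L := {c | ∃ a, x a = some false ∧ c ≤ a}
  have hF : IsLatFilter F := by
    refine ⟨⟨⊤, ⊤, hph.1, le_rfl⟩, fun c d ⟨a, ha, hac⟩ hcd => ⟨a, ha, hac.trans hcd⟩, ?_⟩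
    rintro c d ⟨a, ha, hac⟩ ⟨b, hb, hbd⟩
    exact ⟨a ⊓ b, (hph.2.2 a b true true ha hb).1, inf_le_inf hac hbd⟩
  have hI : IsLatIdeal I := by
    refine ⟨⟨⊥, ⊥, hph.2.1, le_rfl⟩, fun c d ⟨a, ha, hca⟩ hdc => ⟨a, ha, hdc.trans hca⟩, ?_⟩
    rintro c d ⟨a, ha, hca⟩ ⟨b, hb, hdb⟩
    exact ⟨a ⊔ b, (hph.2.2 a b false false ha hb).2, sup_le_sup hca hdb⟩
  have hFI : F ∩ I = ∅ := Set.eq_empty_of_forall_notMem fun c ⟨⟨a, ha, hac⟩, ⟨b, hb, hcb⟩⟩ =>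
    absurd (hph.le_of_le ha hb (hac.trans hcb)) (by decide)
  obtain ⟨G, J, hGJ, hFG, hIJ⟩ := exists_isMDFIP_of_disjoint hF hI hFI
  have hx : pairMap G J = x := hmax _ hGJ.isMPH_pairMap.1 fun a u ha => by
    cases u
    · exact (pairMap_eq_some_false hGJ.2.2.1).2 (hIJ ⟨a, ha, le_rfl⟩)
    · exact pairMap_eq_some_true.2 (hFG ⟨a, ha, le_rfl⟩)
  simp_rw [← hx, pairMap_eq_some_true, pairMap_eq_some_false hGJ.2.2.1, Set.ofPred_mem_eq]
  exact hGJ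

lemma IsMPH.erel_forth_iff {x : L → Option Bool} (hx : IsMPH x) (y : L → Option Bool) :
    (∀ z, IsMPH z → Erel x z → Erel y z) ↔ {a | y a = some true} ⊆ {a | x a = some true} := by
  refine ⟨fun H a hya => ?_, fun hyx z _ hxz a ha => hxz a ⟨hyx ha.1, ha.2⟩⟩
  by_contra hxa
  have hF := hx.isMDFIP.1
  have hd : {b | x b = some true} ∩ Set.Iic a = ∅ :=
    Set.eq_empty_of_forall_notMem fun b ⟨hb, hba⟩ => hxa (hF.2.1 b a hb hba)
  obtain ⟨z, hz, hz₁, hz₀⟩ := exists_isMPH_of_disjoint hF (isLatIdeal_Iic a) hd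
  have hxz : Erel x z := fun b ⟨hb₁, hb₀⟩ => by simp [hz₁ b hb₁] at hb₀
  exact H z hz hxz a ⟨hya, hz₀ a le_rfl⟩

lemma IsMPH.erel_back_iff {x : L → Option Bool} (hx : IsMPH x) (y : L → Option Bool) :
    (∀ z, IsMPH z → Erel z x → Erel z y) ↔ {a | y a = some false} ⊆ {a | x a = some false} := by
  refine ⟨fun H a hya => ?_, fun hyx z _ hzx a ha => hzx a ⟨ha.1, hyx ha.2⟩⟩
  by_contra hxa
  have hI := hx.isMDFIP.2.1
  have hd : Set.Ici a ∩ {b | x b = some false} = ∅ :=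
    Set.eq_empty_of_forall_notMem fun b ⟨hab, hb⟩ => hxa (hI.2.1 b a hb hab)
  obtain ⟨z, hz, hz₁, hz₀⟩ := exists_isMPH_of_disjoint (isLatFilter_Ici a) hI hd
  have hzx : Erel z x := fun b ⟨hb₁, hb₀⟩ => by simp [hz₀ b hb₀] at hb₁
  exact H z hz hzx a ⟨hz₁ a le_rfl, hya⟩

end PartialHom

theorem dual_digraph_forth_back_general {L : Type*} [Lattice L] [BoundedOrder L]
    (x y : L → Option Bool) (hx : IsMPH x) :
    ((∀ z : L → Option Bool, IsMPH z → Erel x z → Erel y z) ↔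
      {a : L | y a = some true} ⊆ {a : L | x a = some true}) ∧
    ((∀ z : L → Option Bool, IsMPH z → Erel z x → Erel z y) ↔
      {a : L | y a = some false} ⊆ {a : L | x a = some false}) :=
  ⟨hx.erel_forth_iff y, hx.erel_back_iff y⟩

/-- For MPHs `x, y` of a bounded lattice: `xE ⊆ yE` iff `y⁻¹(1) ⊆ x⁻¹(1)`,
and `Ex ⊆ Ey` iff `y⁻¹(0) ⊆ x⁻¹(0)`. -/
theorem dual_digraph_forth_back {L : Type*} [Lattice L] [BoundedOrder L]
    (x y : L → Option Bool) (hx : IsMPH x) (hy : IsMPH y) :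
    ((∀ z : L → Option Bool, IsMPH z → Erel x z → Erel y z) ↔
      {a : L | y a = some true} ⊆ {a : L | x a = some true}) ∧
    ((∀ z : L → Option Bool, IsMPH z → Erel z x → Erel z y) ↔
      {a : L | y a = some false} ⊆ {a : L | x a = some false}) :=
  dual_digraph_forth_back_general x y hx
end
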